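/- Let H be a graph on at most n vertices with at least one edge, let J_0 be an arbitrary nonempty edge-induced subgraph of the complete graph K_n, and let 𝐇 be a uniformly random copy of H in K_n. Then the probability that J_0 ⊆ 𝐇 is at most (2 p̃_E(H))^{e(J_0)}; that is, the uniform distribution over copies of H in K_n is R-spread with R = 1/(2 p̃_E(H)). -/
import Mathlib


open Finset

attribute [local instance] Classical.propDecidable

/-- The edge set of the complete graph `K_n` on vertex set `Fin n`. -/
def Kn (n : ℕ) : Finset (Sym2 (Fin n)) :=
  Finset.univ.filter (fun e => ¬ e.IsDiag)

/-- Two edge sets on `Fin n` are isomorphic (as edge-induced graphs) if some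
permutation of the vertices maps one edge set onto the other. -/
def IsCopy (n : ℕ) (A B : Finset (Sym2 (Fin n))) : Prop :=
  ∃ σ : Equiv.Perm (Fin n), A.image (Sym2.map σ) = B

/-- `copyCount n H' H` is `M_{H',H}`, the number of edge-induced subgraphs of `H`
that are isomorphic copies of `H'`. -/
noncomputable def copyCount (n : ℕ) (H' H : Finset (Sym2 (Fin n))) : ℕ :=
  (H.powerset.filter (fun S => IsCopy n H' S)).card

/-- The number of copies of `H` in `K_n` whose edge set contains `J0`. -/
noncomputable def copyCountContaining (n : ℕ) (H J0 : Finset (Sym2 (Fin n))) : ℕ :=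
  ((Kn n).powerset.filter (fun S => IsCopy n H S ∧ J0 ⊆ S)).card

/-- The probability that `G(n,p)` equals the graph with edge set `G ⊆ K_n`. -/
noncomputable def erWeight (n : ℕ) (p : ℝ) (G : Finset (Sym2 (Fin n))) : ℝ :=
  p ^ G.card * (1 - p) ^ ((Kn n).card - G.card)

/-- `P_p(E)`: the probability that `G(n,p)` satisfies the event `E`. -/
noncomputable def erProb (n : ℕ) (p : ℝ) (E : Finset (Sym2 (Fin n)) → Prop) : ℝ :=
  ∑ G ∈ (Kn n).powerset, if E G then erWeight n p G else 0

/-- `E_p f`: the expectation of `f` under `G(n,p)`. -/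
noncomputable def erExp (n : ℕ) (p : ℝ) (f : Finset (Sym2 (Fin n)) → ℝ) : ℝ :=
  ∑ G ∈ (Kn n).powerset, erWeight n p G * f G

/-- The critical threshold `p_c(H)`. -/
noncomputable def pc (n : ℕ) (H : Finset (Sym2 (Fin n))) : ℝ :=
  sInf {p : ℝ | p ∈ Set.Icc (0:ℝ) 1 ∧
    1/2 ≤ erProb n p (fun G => 1 ≤ copyCount n H G)}

/-- The Kahn–Kalai subgraph expectation threshold `p_E(H)`. -/
noncomputable def pE (n : ℕ) (H : Finset (Sym2 (Fin n))) : ℝ :=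
  sInf {p : ℝ | p ∈ Set.Icc (0:ℝ) 1 ∧
    ∀ H' ⊆ H, H'.Nonempty →
      1/2 ≤ erExp n p (fun G => (copyCount n H' G : ℝ))}

/-- The modified subgraph expectation threshold `p̃_E(H)`. -/
noncomputable def ptE (n : ℕ) (H : Finset (Sym2 (Fin n))) : ℝ :=
  sInf {p : ℝ | p ∈ Set.Icc (0:ℝ) 1 ∧
    ∀ H' ⊆ H, H'.Nonempty →
      (copyCount n H' H : ℝ) / 2 ≤ erExp n p (fun G => (copyCount n H' G : ℝ))}

/-- The Hamiltonian cycle on the `n` vertices of `K_n`, as an edge set. -/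
def cycleEdges (n : ℕ) : Finset (Sym2 (Fin n)) :=
  Finset.univ.image (fun i => s(i, finRotate n i))

section SpreadAux

variable {n : ℕ}

private lemma sym2Inj (σ : Equiv.Perm (Fin n)) : Function.Injective (Sym2.map σ) :=
  Sym2.map.injective σ.injective

/-- Action of a permutation on an edge set. -/
def Phi (σ : Equiv.Perm (Fin n)) (S : Finset (Sym2 (Fin n))) : Finset (Sym2 (Fin n)) :=
  S.image (Sym2.map σ)

lemma Phi_inj (σ : Equiv.Perm (Fin n)) : Function.Injective (Phi σ) :=
  Finset.image_injective (sym2Inj σ)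

lemma Phi_comp (σ τ : Equiv.Perm (Fin n)) (S : Finset (Sym2 (Fin n))) :
    Phi σ (Phi τ S) = Phi (σ * τ) S := by
  unfold Phi
  rw [Finset.image_image]
  apply Finset.image_congr
  intro e _
  simp [Sym2.map_map]

lemma Phi_one (S : Finset (Sym2 (Fin n))) : Phi 1 S = S := by
  have h : Sym2.map (⇑(1 : Equiv.Perm (Fin n))) = id := by
    funext e
    induction e with
    | _ a b => simp
  unfold Phi
  rw [h, Finset.image_id]

lemma Phi_inv_Phi (σ : Equiv.Perm (Fin n)) (S : Finset (Sym2 (Fin n))) :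
    Phi σ⁻¹ (Phi σ S) = S := by
  rw [Phi_comp, inv_mul_cancel, Phi_one]

lemma Phi_Phi_inv (σ : Equiv.Perm (Fin n)) (S : Finset (Sym2 (Fin n))) :
    Phi σ (Phi σ⁻¹ S) = S := by
  rw [Phi_comp, mul_inv_cancel, Phi_one]

lemma Phi_subset_iff (σ : Equiv.Perm (Fin n)) {A B : Finset (Sym2 (Fin n))} :
    Phi σ A ⊆ Phi σ B ↔ A ⊆ B :=
  Finset.image_subset_image_iff (sym2Inj σ)

lemma Phi_mono (σ : Equiv.Perm (Fin n)) {A B : Finset (Sym2 (Fin n))} (h : A ⊆ B) :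
    Phi σ A ⊆ Phi σ B := (Phi_subset_iff σ).mpr h

lemma Phi_card (σ : Equiv.Perm (Fin n)) (S : Finset (Sym2 (Fin n))) :
    (Phi σ S).card = S.card :=
  Finset.card_image_of_injective _ (sym2Inj σ)

lemma Phi_Kn (σ : Equiv.Perm (Fin n)) : Phi σ (Kn n) = Kn n := by
  apply Finset.Subset.antisymm
  · intro e he
    simp only [Phi, Finset.mem_image] at he
    obtain ⟨e', he', rfl⟩ := he
    simp only [Kn, Finset.mem_filter, Finset.mem_univ, true_and] at he' ⊢
    rwa [Sym2.isDiag_map σ.injective]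
  · intro e he
    simp only [Phi, Finset.mem_image]
    refine ⟨Sym2.map ⇑σ.symm e, ?_, ?_⟩
    · simp only [Kn, Finset.mem_filter, Finset.mem_univ, true_and] at he ⊢
      rwa [Sym2.isDiag_map σ.symm.injective]
    · rw [Sym2.map_map]
      induction e with
      | _ a b => simp

lemma isCopy_refl (A : Finset (Sym2 (Fin n))) : IsCopy n A A := ⟨1, Phi_one A⟩

lemma isCopy_symm {A B : Finset (Sym2 (Fin n))} (h : IsCopy n A B) : IsCopy n B A := by
  obtain ⟨σ, rfl⟩ := h
  exact ⟨σ⁻¹, Phi_inv_Phi σ A⟩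

lemma isCopy_trans {A B C : Finset (Sym2 (Fin n))} (h1 : IsCopy n A B) (h2 : IsCopy n B C) :
    IsCopy n A C := by
  obtain ⟨σ, rfl⟩ := h1
  obtain ⟨τ, rfl⟩ := h2
  exact ⟨τ * σ, (Phi_comp τ σ A).symm⟩

lemma isCopy_phi_right (σ : Equiv.Perm (Fin n)) {A B : Finset (Sym2 (Fin n))} :
    IsCopy n A (Phi σ B) ↔ IsCopy n A B := by
  constructor
  · intro h
    exact isCopy_trans h ⟨σ⁻¹, Phi_inv_Phi σ B⟩
  · intro h
    exact isCopy_trans h ⟨σ, rfl⟩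

lemma isCopy_card {A B : Finset (Sym2 (Fin n))} (h : IsCopy n A B) : B.card = A.card := by
  obtain ⟨σ, rfl⟩ := h
  exact Phi_card σ A

lemma copyCount_congr {A B : Finset (Sym2 (Fin n))} (h : IsCopy n A B)
    (G : Finset (Sym2 (Fin n))) : copyCount n A G = copyCount n B G := by
  unfold copyCount
  congr 1
  apply Finset.filter_congr
  intro S _
  constructor
  · intro hAS; exact isCopy_trans (isCopy_symm h) hAS
  · intro hBS; exact isCopy_trans h hBS

lemma copyCount_phi (σ : Equiv.Perm (Fin n)) (A G : Finset (Sym2 (Fin n))) :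
    copyCount n A (Phi σ G) = copyCount n A G := by
  unfold copyCount
  have hset : (Phi σ G).powerset.filter (fun S => IsCopy n A S) =
      (G.powerset.filter (fun S => IsCopy n A S)).image (Phi σ) := by
    ext S
    simp only [Finset.mem_filter, Finset.mem_powerset, Finset.mem_image]
    constructor
    · rintro ⟨hsub, hcopy⟩
      refine ⟨Phi σ⁻¹ S, ⟨?_, (isCopy_phi_right σ⁻¹).mpr hcopy⟩, Phi_Phi_inv σ S⟩
      have h2 := Phi_mono σ⁻¹ hsub
      rwa [Phi_inv_Phi] at h2
    · rintro ⟨T, ⟨hT, hc⟩, rfl⟩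
      exact ⟨Phi_mono σ hT, (isCopy_phi_right σ).mpr hc⟩
  rw [hset, Finset.card_image_of_injective _ (Phi_inj σ)]

lemma copyCountContaining_phi (σ : Equiv.Perm (Fin n)) (H J0 : Finset (Sym2 (Fin n))) :
    copyCountContaining n H (Phi σ J0) = copyCountContaining n H J0 := by
  unfold copyCountContaining
  have hset : (Kn n).powerset.filter (fun S => IsCopy n H S ∧ Phi σ J0 ⊆ S) =
      ((Kn n).powerset.filter (fun S => IsCopy n H S ∧ J0 ⊆ S)).image (Phi σ) := by
    ext S
    simp only [Finset.mem_filter, Finset.mem_powerset, Finset.mem_image]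
    constructor
    · rintro ⟨hsub, hcopy, hJ⟩
      refine ⟨Phi σ⁻¹ S, ⟨?_, (isCopy_phi_right σ⁻¹).mpr hcopy, ?_⟩, Phi_Phi_inv σ S⟩
      · have h2 := Phi_mono σ⁻¹ hsub
        rwa [Phi_Kn] at h2
      · have h2 := Phi_mono σ⁻¹ hJ
        rwa [Phi_inv_Phi] at h2
    · rintro ⟨T, ⟨hT, hc, hJ⟩, rfl⟩
      refine ⟨?_, (isCopy_phi_right σ).mpr hc, Phi_mono σ hJ⟩
      have h2 := Phi_mono σ hT
      rwa [Phi_Kn] at h2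
  rw [hset, Finset.card_image_of_injective _ (Phi_inj σ)]

lemma double_count {α : Type*} [DecidableEq α] (A B : Finset (Finset α)) :
    ∑ J ∈ A, (B.filter (fun S => J ⊆ S)).card
      = ∑ S ∈ B, (A.filter (fun J => J ⊆ S)).card := by
  simp_rw [Finset.card_filter]
  exact Finset.sum_comm

lemma count_identity (H J0 : Finset (Sym2 (Fin n))) (hH : H ⊆ Kn n) (hJ0 : J0 ⊆ Kn n) :
    copyCountContaining n H J0 * copyCount n J0 (Kn n)
      = copyCount n H (Kn n) * copyCount n J0 H := by
  classical
  set CJ := (Kn n).powerset.filter (fun S => IsCopy n J0 S) with hCJ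
  set CH := (Kn n).powerset.filter (fun S => IsCopy n H S) with hCH
  have hdc := double_count CJ CH
  have hL : ∑ J ∈ CJ, (CH.filter (fun S => J ⊆ S)).card
      = CJ.card * copyCountContaining n H J0 := by
    rw [Finset.sum_congr rfl (fun J hJ => ?_), Finset.sum_const, smul_eq_mul]
    have hJmem := Finset.mem_filter.mp hJ
    obtain ⟨σ, rfl⟩ := hJmem.2
    show (CH.filter (fun S => Phi σ J0 ⊆ S)).card = copyCountContaining n H J0
    rw [hCH, Finset.filter_filter]
    exact copyCountContaining_phi σ H J0
  have hR : ∑ S ∈ CH, (CJ.filter (fun J => J ⊆ S)).card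
      = CH.card * copyCount n J0 H := by
    rw [Finset.sum_congr rfl (fun S hS => ?_), Finset.sum_const, smul_eq_mul]
    have hSmem := Finset.mem_filter.mp hS
    have hSsub : S ⊆ Kn n := Finset.mem_powerset.mp hSmem.1
    have h1 : CJ.filter (fun J => J ⊆ S)
        = S.powerset.filter (fun J => IsCopy n J0 J) := by
      rw [hCJ, Finset.filter_filter]
      ext J
      simp only [Finset.mem_filter, Finset.mem_powerset]
      constructor
      · rintro ⟨_, hc, hJS⟩; exact ⟨hJS, hc⟩
      · rintro ⟨hJS, hc⟩; exact ⟨hJS.trans hSsub, hc, hJS⟩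
    rw [h1]
    show copyCount n J0 S = copyCount n J0 H
    obtain ⟨σ, rfl⟩ := hSmem.2
    exact copyCount_phi σ J0 H
  rw [hL, hR] at hdc
  have hCJcard : CJ.card = copyCount n J0 (Kn n) := rfl
  have hCHcard : CH.card = copyCount n H (Kn n) := rfl
  rw [hCJcard, hCHcard] at hdc
  rw [mul_comm (copyCountContaining n H J0)]
  exact hdc

lemma sum_bern {α : Type*} [DecidableEq α] (s : Finset α) (p : ℝ) :
    ∑ t ∈ s.powerset, p ^ t.card * (1 - p) ^ (s.card - t.card) = 1 := by
  have h := Finset.prod_add (fun _ : α => p) (fun _ : α => (1 : ℝ) - p) s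
  have h2 : ∑ t ∈ s.powerset, p ^ t.card * (1 - p) ^ (s.card - t.card)
      = ∑ t ∈ s.powerset, (∏ _i ∈ t, p) * ∏ _i ∈ s \ t, ((1 : ℝ) - p) := by
    apply Finset.sum_congr rfl
    intro t ht
    rw [Finset.prod_const, Finset.prod_const, Finset.card_sdiff_of_subset (Finset.mem_powerset.mp ht)]
  rw [h2, ← h]
  simp

lemma sum_weight_supset (J : Finset (Sym2 (Fin n))) (hJ : J ⊆ Kn n) (p : ℝ) :
    ∑ G ∈ (Kn n).powerset.filter (fun G => J ⊆ G), erWeight n p G = p ^ J.card := by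
  classical
  have key : ∑ G ∈ (Kn n).powerset.filter (fun G => J ⊆ G), erWeight n p G
      = ∑ T ∈ ((Kn n) \ J).powerset,
          p ^ J.card * (p ^ T.card * (1 - p) ^ (((Kn n) \ J).card - T.card)) := by
    apply Finset.sum_nbij' (i := fun G => G \ J) (j := fun T => J ∪ T)
    · intro G hG
      rw [Finset.mem_filter, Finset.mem_powerset] at hG
      exact Finset.mem_powerset.mpr (Finset.sdiff_subset_sdiff hG.1 (le_refl J))
    · intro T hT
      rw [Finset.mem_powerset] at hT
      rw [Finset.mem_filter, Finset.mem_powerset]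
      exact ⟨Finset.union_subset hJ (hT.trans Finset.sdiff_subset), Finset.subset_union_left⟩
    · intro G hG
      rw [Finset.mem_filter] at hG
      exact Finset.union_sdiff_of_subset hG.2
    · intro T hT
      rw [Finset.mem_powerset] at hT
      exact Finset.union_sdiff_cancel_left (Finset.disjoint_sdiff.mono_right hT)
    · intro G hG
      rw [Finset.mem_filter, Finset.mem_powerset] at hG
      obtain ⟨hGKn, hJG⟩ := hG
      unfold erWeight
      have hc1 : G.card = J.card + (G \ J).card := by
        have := Finset.card_sdiff_add_card_eq_card hJG
        omega
      have hc2 : (Kn n).card - G.card = ((Kn n) \ J).card - (G \ J).card := by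
        have h3 := Finset.card_sdiff_of_subset hJG
        have h4 := Finset.card_sdiff_of_subset hJ
        have h5 := Finset.card_le_card hJG
        have h6 := Finset.card_le_card hGKn
        have h7 := Finset.card_le_card hJ
        omega
      rw [hc2, hc1, pow_add]
      ring
  rw [key, ← Finset.mul_sum, sum_bern, mul_one]

lemma erExp_copyCount (J0 : Finset (Sym2 (Fin n))) (hJ0 : J0 ⊆ Kn n) (p : ℝ) :
    erExp n p (fun G => (copyCount n J0 G : ℝ))
      = (copyCount n J0 (Kn n) : ℝ) * p ^ J0.card := by
  classical
  set CJ := (Kn n).powerset.filter (fun S => IsCopy n J0 S) with hCJ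
  unfold erExp
  have step1 : ∀ G ∈ (Kn n).powerset,
      erWeight n p G * (copyCount n J0 G : ℝ)
        = ∑ J ∈ CJ, (if J ⊆ G then erWeight n p G else 0) := by
    intro G hG
    have hGsub : G ⊆ Kn n := Finset.mem_powerset.mp hG
    have hcc : copyCount n J0 G = (CJ.filter (fun J => J ⊆ G)).card := by
      unfold copyCount
      congr 1
      rw [hCJ, Finset.filter_filter]
      ext J
      simp only [Finset.mem_filter, Finset.mem_powerset]
      constructor
      · rintro ⟨hJG, hc⟩; exact ⟨hJG.trans hGsub, hc, hJG⟩
      · rintro ⟨_, hc, hJG⟩; exact ⟨hJG, hc⟩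
    rw [hcc, Finset.card_filter]
    push_cast
    rw [Finset.mul_sum]
    apply Finset.sum_congr rfl
    intro J _
    split <;> simp
  rw [Finset.sum_congr rfl step1, Finset.sum_comm]
  have step2 : ∀ J ∈ CJ,
      ∑ G ∈ (Kn n).powerset, (if J ⊆ G then erWeight n p G else 0) = p ^ J0.card := by
    intro J hJ
    have hJmem := Finset.mem_filter.mp hJ
    have hJKn : J ⊆ Kn n := Finset.mem_powerset.mp hJmem.1
    have hcard : J.card = J0.card := isCopy_card hJmem.2
    rw [← Finset.sum_filter, sum_weight_supset J hJKn p, hcard]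
  rw [Finset.sum_congr rfl step2, Finset.sum_const, nsmul_eq_mul]
  rfl

lemma self_copy_mem (A : Finset (Sym2 (Fin n))) (hA : A ⊆ Kn n) :
    A ∈ (Kn n).powerset.filter (fun S => IsCopy n A S) :=
  Finset.mem_filter.mpr ⟨Finset.mem_powerset.mpr hA, isCopy_refl A⟩

lemma one_mem_ptE_set (H : Finset (Sym2 (Fin n))) (hH : H ⊆ Kn n) :
    (1 : ℝ) ∈ {p : ℝ | p ∈ Set.Icc (0:ℝ) 1 ∧
      ∀ H' ⊆ H, H'.Nonempty →
        (copyCount n H' H : ℝ) / 2 ≤ erExp n p (fun G => (copyCount n H' G : ℝ))} := by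
  refine ⟨⟨zero_le_one, le_refl 1⟩, ?_⟩
  intro H' hH' _
  rw [erExp_copyCount H' (hH'.trans hH), one_pow, mul_one]
  have mono : copyCount n H' H ≤ copyCount n H' (Kn n) :=
    Finset.card_le_card (Finset.filter_subset_filter _ (Finset.powerset_mono.mpr hH))
  have hle : (copyCount n H' H : ℝ) ≤ (copyCount n H' (Kn n) : ℝ) := Nat.cast_le.mpr mono
  have hnn : (0 : ℝ) ≤ (copyCount n H' H : ℝ) := Nat.cast_nonneg _
  linarith

end SpreadAux

/-- The uniform distribution over copies of `H` in `K_n` is `R`-spread with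
`R = 1/(2 p̃_E(H))`: for every nonempty edge-induced subgraph `J0` of `K_n`, a
uniformly random copy `𝐇` of `H` satisfies `π(J0 ⊆ 𝐇) ≤ (2 p̃_E(H))^{e(J0)}`. -/
theorem uniform_copies_spread (n : ℕ) (H : Finset (Sym2 (Fin n))) (hH : H ⊆ Kn n)
    (hne : H.Nonempty) (J0 : Finset (Sym2 (Fin n))) (hJ0 : J0 ⊆ Kn n)
    (hJ0ne : J0.Nonempty) :
    (copyCountContaining n H J0 : ℝ) / (copyCount n H (Kn n) : ℝ)
      ≤ (2 * ptE n H) ^ J0.card := by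
  classical
  set Sset := {p : ℝ | p ∈ Set.Icc (0:ℝ) 1 ∧
    ∀ H' ⊆ H, H'.Nonempty →
      (copyCount n H' H : ℝ) / 2 ≤ erExp n p (fun G => (copyCount n H' G : ℝ))} with hSset
  have hptE : ptE n H = sInf Sset := rfl
  have hone : (1 : ℝ) ∈ Sset := one_mem_ptE_set H hH
  have hptE0 : 0 ≤ ptE n H := by
    rw [hptE]
    exact le_csInf ⟨1, hone⟩ (fun p hp => hp.1.1)
  have hNHpos : 0 < copyCount n H (Kn n) :=
    Finset.card_pos.mpr ⟨H, self_copy_mem H hH⟩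
  have hNJpos : 0 < copyCount n J0 (Kn n) :=
    Finset.card_pos.mpr ⟨J0, self_copy_mem J0 hJ0⟩
  have hid := count_identity H J0 hH hJ0
  set M := copyCount n J0 H with hM
  by_cases hM0 : M = 0
  · have hC0 : copyCountContaining n H J0 = 0 := by
      rw [hM0, mul_zero] at hid
      rcases Nat.mul_eq_zero.mp hid with h | h
      · exact h
      · omega
    rw [hC0]
    simp only [Nat.cast_zero, zero_div]
    exact pow_nonneg (by linarith) _
  · obtain ⟨H', hH'mem⟩ : (H.powerset.filter (fun S => IsCopy n J0 S)).Nonempty :=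
      Finset.card_pos.mp (Nat.pos_of_ne_zero hM0)
    obtain ⟨hH'sub, hH'copy⟩ := Finset.mem_filter.mp hH'mem
    have hH'H : H' ⊆ H := Finset.mem_powerset.mp hH'sub
    have hcards : H'.card = J0.card := isCopy_card hH'copy
    have hJ0card : 1 ≤ J0.card := Finset.card_pos.mpr hJ0ne
    have hH'ne : H'.Nonempty := Finset.card_pos.mp (by omega)
    have hCCeq : ∀ G, copyCount n H' G = copyCount n J0 G :=
      fun G => (copyCount_congr hH'copy G).symm
    have key : ∀ p ∈ Sset, (copyCountContaining n H J0 : ℝ) / (copyCount n H (Kn n) : ℝ)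
        ≤ (2 * p) ^ J0.card := by
      intro p hp
      obtain ⟨⟨hp0, hp1⟩, hcond⟩ := hp
      have h1 := hcond H' hH'H hH'ne
      have e1 : erExp n p (fun G => (copyCount n H' G : ℝ))
          = erExp n p (fun G => (copyCount n J0 G : ℝ)) := by
        unfold erExp
        apply Finset.sum_congr rfl
        intro G _
        simp only [hCCeq]
      rw [e1, erExp_copyCount J0 hJ0 p] at h1
      have hMH' : copyCount n H' H = M := hCCeq H
      rw [hMH'] at h1
      have hidR : (copyCountContaining n H J0 : ℝ) * (copyCount n J0 (Kn n) : ℝ)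
          = (copyCount n H (Kn n) : ℝ) * (M : ℝ) := by exact_mod_cast hid
      have hpe : (0 : ℝ) ≤ p ^ J0.card := pow_nonneg hp0 _
      have h2e : (2 : ℝ) * p ^ J0.card ≤ (2 * p) ^ J0.card := by
        rw [mul_pow]
        apply mul_le_mul_of_nonneg_right _ hpe
        calc (2 : ℝ) = 2 ^ 1 := (pow_one 2).symm
          _ ≤ 2 ^ J0.card := pow_le_pow_right₀ one_le_two hJ0card
      have hNJR : (0 : ℝ) < (copyCount n J0 (Kn n) : ℝ) := by exact_mod_cast hNJpos
      have hNHR : (0 : ℝ) < (copyCount n H (Kn n) : ℝ) := by exact_mod_cast hNHpos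
      have h2 : (M : ℝ) ≤ (copyCount n J0 (Kn n) : ℝ) * (2 * p) ^ J0.card := by
        calc (M : ℝ) ≤ 2 * ((copyCount n J0 (Kn n) : ℝ) * p ^ J0.card) := by linarith
          _ = (copyCount n J0 (Kn n) : ℝ) * (2 * p ^ J0.card) := by ring
          _ ≤ (copyCount n J0 (Kn n) : ℝ) * (2 * p) ^ J0.card :=
              mul_le_mul_of_nonneg_left h2e (le_of_lt hNJR)
      rw [div_le_iff₀ hNHR]
      have h3 : (copyCountContaining n H J0 : ℝ) * (copyCount n J0 (Kn n) : ℝ)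
          ≤ ((2 * p) ^ J0.card * (copyCount n H (Kn n) : ℝ)) * (copyCount n J0 (Kn n) : ℝ) := by
        rw [hidR]
        calc (copyCount n H (Kn n) : ℝ) * (M : ℝ)
            ≤ (copyCount n H (Kn n) : ℝ) * ((copyCount n J0 (Kn n) : ℝ) * (2 * p) ^ J0.card) :=
              mul_le_mul_of_nonneg_left h2 (le_of_lt hNHR)
          _ = ((2 * p) ^ J0.card * (copyCount n H (Kn n) : ℝ)) * (copyCount n J0 (Kn n) : ℝ) := by
              ring
      exact le_of_mul_le_mul_right h3 hNJR
    have hlim : Filter.Tendsto (fun q : ℝ => (2 * q) ^ J0.card)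
        (nhdsWithin (ptE n H) (Set.Ioi (ptE n H))) (nhds ((2 * ptE n H) ^ J0.card)) := by
      apply Filter.Tendsto.mono_left _ nhdsWithin_le_nhds
      exact Continuous.tendsto (by continuity) _
    apply ge_of_tendsto hlim
    filter_upwards [self_mem_nhdsWithin] with q hq
    have hq' : ptE n H < q := hq
    have hex : ∃ p ∈ Sset, p < q := by
      by_contra hcon
      push_neg at hcon
      have : q ≤ sInf Sset := le_csInf ⟨1, hone⟩ hcon
      rw [← hptE] at this
      linarith
    obtain ⟨p, hpS, hpq⟩ := hex
    calc (copyCountContaining n H J0 : ℝ) / (copyCount n H (Kn n) : ℝ)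
        ≤ (2 * p) ^ J0.card := key p hpS
      _ ≤ (2 * q) ^ J0.card := by
          apply pow_le_pow_left₀ (by linarith [hpS.1.1]) (by linarith)
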